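/- arXiv:2112.10426 — 3 statements merged into one kernel-verified Lean document; each statement's English description precedes it below -/
import Mathlib

section
/- For all integers d ≥ 3 and n ≥ 4, the domination number of the undirected 3-constrained de Bruijn graph satisfies d(d−1)(d−2)^{n−2}/(2d−3) ≤ γ(cDB(d,3,n)) ≤ (d−1)(d−2)^{n−2}. -/
/-- A sequence `x` of length `n` over the alphabet `Fin d` is `t`-constrained if
equal symbols occur at positions at distance at least `t`. -/
def dbConstrained (d t n : ℕ) (x : Fin n → Fin d) : Prop :=
  ∀ i j : Fin n, i < j → x i = x j → t ≤ (j : ℕ) - (i : ℕ)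

/-- The vertex set `V(d,t,n)` of the `t`-constrained de Bruijn graph: all
`t`-constrained sequences of length `n` over a `d`-letter alphabet. -/
abbrev dbVtx (d t n : ℕ) : Type := {x : Fin n → Fin d // dbConstrained d t n x}

/-- `dbShift x y` holds when there is a directed de Bruijn edge from `x` to `y`,
i.e. `y` is obtained from `x` by deleting its first symbol and appending a new
last symbol. -/
def dbShift {d t n : ℕ} (x y : dbVtx d t n) : Prop :=
  ∀ (i : Fin n) (h : (i : ℕ) + 1 < n), y.val i = x.val ⟨(i : ℕ) + 1, h⟩

/-- `S` is a dominating set of the directed `t`-constrained de Bruijn graph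
`cDB⁺(d,t,n)`: every vertex is dominated by (equal to, or an out-neighbor of)
some element of `S`. -/
def dbDirDominating {d t n : ℕ} (S : Set (dbVtx d t n)) : Prop :=
  ∀ v : dbVtx d t n, ∃ s ∈ S, s = v ∨ dbShift s v

/-- The domination number `γ(cDB⁺(d,t,n))` of the directed `t`-constrained
de Bruijn graph. -/
noncomputable def gammaDir (d t n : ℕ) : ℕ :=
  sInf {k | ∃ S : Set (dbVtx d t n), S.Finite ∧ S.ncard = k ∧ dbDirDominating S}

/-- Adjacency in the undirected `t`-constrained de Bruijn graph `cDB(d,t,n)`: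
edge directions are ignored and loops are removed. -/
def dbAdj {d t n : ℕ} (x y : dbVtx d t n) : Prop :=
  x ≠ y ∧ (dbShift x y ∨ dbShift y x)

/-- `S` is a dominating set of the undirected graph `cDB(d,t,n)`: every vertex
is dominated by (equal to, or adjacent to) some element of `S`. -/
def dbUndirDominating {d t n : ℕ} (S : Set (dbVtx d t n)) : Prop :=
  ∀ v : dbVtx d t n, ∃ s ∈ S, s = v ∨ dbAdj s v

/-- The domination number `γ(cDB(d,t,n))` of the undirected `t`-constrained
de Bruijn graph. -/
noncomputable def gammaUndir (d t n : ℕ) : ℕ :=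
  sInf {k | ∃ S : Set (dbVtx d t n), S.Finite ∧ S.ncard = k ∧ dbUndirDominating S}

/-!
Fix a symbol `c`. The vertices starting with `c` dominate `cDB(d,3,n)`: a vertex `v` with
`v₀ ≠ c` is adjacent to `v₁ ⋯ v_{n-1} a` for a suitable `a` when `v₁ = c`, and otherwise to
`c v₀ ⋯ v_{n-2}`.
Since every symbol after the second must avoid its two predecessors, there are
`(d-1)(d-2)^(n-2)` such vertices, and `d(d-1)(d-2)^(n-2)` vertices in all. For the same reason
a vertex has exactly `d-2` out-neighbours and `d-2` in-neighbours, so each vertex dominates at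
most `2d-3` vertices, which gives the lower bound.
-/

instance {d t n : ℕ} : DecidablePred (dbConstrained d t n) := fun _ => by
  unfold dbConstrained; infer_instance

instance {d t n : ℕ} (x y : dbVtx d t n) : Decidable (dbShift x y) := by
  unfold dbShift; infer_instance

instance {d t n : ℕ} (x y : dbVtx d t n) : Decidable (dbAdj x y) := by
  unfold dbAdj; infer_instance

def dbAppendable {d n : ℕ} (t : ℕ) (y : Fin n → Fin d) (a : Fin d) : Prop :=
  ∀ i : Fin n, y i = a → t ≤ n - i

def dbPrependable {d n : ℕ} (t : ℕ) (y : Fin n → Fin d) (a : Fin d) : Prop :=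
  ∀ i : Fin n, y i = a → t ≤ i + 1

instance {d n t : ℕ} (y : Fin n → Fin d) : DecidablePred (dbAppendable t y) := fun _ => by
  unfold dbAppendable; infer_instance

instance {d n t : ℕ} (y : Fin n → Fin d) : DecidablePred (dbPrependable t y) := fun _ => by
  unfold dbPrependable; infer_instance

open Finset

theorem Fintype.card_subtype_ne_and_ne {α : Type*} [Fintype α] [DecidableEq α] {u w : α}
    (huw : u ≠ w) : Fintype.card {a // a ≠ u ∧ a ≠ w} = Fintype.card α - 2 := by
  rw [← Finset.card_pair huw, ← Fintype.card_coe, ← Fintype.card_subtype_compl]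
  exact Fintype.card_congr (Equiv.subtypeEquivRight (by simp))

theorem Fintype.card_le_card_mul_of_forall_exists_mem {α : Type*} [Fintype α] [DecidableEq α]
    (N : α → Finset α) (S : Finset α) {k : ℕ} (hS : ∀ v, ∃ s ∈ S, v ∈ N s)
    (hN : ∀ s ∈ S, (N s).card ≤ k) : Fintype.card α ≤ S.card * k :=
  (card_le_card fun v _ => mem_biUnion.2 (hS v)).trans (card_biUnion_le_card_mul S N k hN)

section General

variable {d t n : ℕ}

theorem dbConstrained_snoc_iff {x : Fin n → Fin d} {a : Fin d} :
    dbConstrained d t (n + 1) (Fin.snoc x a) ↔ dbConstrained d t n x ∧ dbAppendable t x a := by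
  simp [dbConstrained, dbAppendable, Fin.forall_fin_succ', forall_and,
    (Fin.castSucc_lt_last _).not_gt]

theorem dbConstrained_cons_iff {x : Fin n → Fin d} {a : Fin d} :
    dbConstrained d t (n + 1) (Fin.cons a x) ↔ dbConstrained d t n x ∧ dbPrependable t x a := by
  simp [dbConstrained, dbPrependable, Fin.forall_fin_succ, eq_comm, and_comm]

theorem dbConstrained_iff_init {x : Fin (n + 1) → Fin d} :
    dbConstrained d t (n + 1) x ↔
      dbConstrained d t n (Fin.init x) ∧ dbAppendable t (Fin.init x) (x (Fin.last n)) := by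
  rw [← dbConstrained_snoc_iff, Fin.snoc_init_self]

theorem dbConstrained_iff_tail {x : Fin (n + 1) → Fin d} :
    dbConstrained d t (n + 1) x ↔
      dbConstrained d t n (Fin.tail x) ∧ dbPrependable t (Fin.tail x) (x 0) := by
  rw [← dbConstrained_cons_iff, Fin.cons_self_tail]

/-- At most `t - 1` symbols are excluded: those among the last `t - 1` positions of `y`. -/
theorem exists_dbAppendable (h : t - 1 < d) (y : Fin n → Fin d) : ∃ a, dbAppendable t y a := by
  set near := univ.filter fun i : Fin n => n < i + t
  have hcard : (near.image y).card < (univ : Finset (Fin d)).card :=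
    calc (near.image y).card ≤ near.card := card_image_le
      _ ≤ (range (t - 1)).card := by
        refine card_le_card_of_injOn (fun i => n - 1 - i) (fun i hi => ?_)
          (fun i hi j hj hij => ?_)
        · simp only [near, coe_filter, mem_univ, true_and, Set.mem_ofPred_eq, coe_range,
            Set.mem_Iio] at hi ⊢
          omega
        · simp only [near, coe_filter, mem_univ, true_and, Set.mem_ofPred_eq] at hi hj
          exact Fin.ext (by simp only at hij; omega)
      _ < _ := by simpa using h
  obtain ⟨a, -, ha⟩ := exists_mem_notMem_of_card_lt_card hcard
  exact ⟨a, fun i hi => by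
    by_contra hlt
    exact ha (mem_image.2 ⟨i, by simp only [near, mem_filter, mem_univ, true_and]; omega, hi⟩)⟩

theorem dbShift_iff {x y : dbVtx d t (n + 1)} : dbShift x y ↔ Fin.init y.val = Fin.tail x.val :=
  ⟨fun h => funext fun i => h i.castSucc (by simp), fun h i _ => congrFun h ⟨i, by omega⟩⟩

def dbVtxSnocEquiv : dbVtx d t (n + 1) ≃ Σ y : dbVtx d t n, {a // dbAppendable t y.val a} where
  toFun x := ⟨⟨Fin.init x.val, (dbConstrained_iff_init.1 x.2).1⟩,
    ⟨x.val (Fin.last n), (dbConstrained_iff_init.1 x.2).2⟩⟩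
  invFun p := ⟨Fin.snoc p.1.val p.2.val, dbConstrained_snoc_iff.2 ⟨p.1.2, p.2.2⟩⟩
  left_inv x := Subtype.ext (Fin.snoc_init_self x.val)
  right_inv _ := Sigma.subtype_ext (Subtype.ext (Fin.init_snoc (α := fun _ => Fin d) _ _))
    (Fin.snoc_last (α := fun _ => Fin d) _ _)

def dbShiftOutEquiv (x : dbVtx d t (n + 1)) :
    {y // dbShift x y} ≃ {a // dbAppendable t (Fin.tail x.val) a} where
  toFun y := ⟨y.1.val (Fin.last n), by
    simpa [dbShift_iff.1 y.2] using (dbConstrained_iff_init.1 y.1.2).2⟩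
  invFun a := ⟨⟨Fin.snoc (Fin.tail x.val) a.val,
      dbConstrained_snoc_iff.2 ⟨(dbConstrained_iff_tail.1 x.2).1, a.2⟩⟩,
    dbShift_iff.2 (Fin.init_snoc (α := fun _ => Fin d) _ _)⟩
  left_inv y := by
    ext1; ext1
    change Fin.snoc (Fin.tail x.val) (y.1.val (Fin.last n)) = y.1.val
    rw [← dbShift_iff.1 y.2, Fin.snoc_init_self]
  right_inv a := Subtype.ext (Fin.snoc_last (α := fun _ => Fin d) _ _)

def dbShiftInEquiv (x : dbVtx d t (n + 1)) :
    {y // dbShift y x} ≃ {a // dbPrependable t (Fin.init x.val) a} where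
  toFun y := ⟨y.1.val 0, by
    simpa [← dbShift_iff.1 y.2] using (dbConstrained_iff_tail.1 y.1.2).2⟩
  invFun a := ⟨⟨Fin.cons a.val (Fin.init x.val),
      dbConstrained_cons_iff.2 ⟨(dbConstrained_iff_init.1 x.2).1, a.2⟩⟩,
    dbShift_iff.2 (Fin.tail_cons (α := fun _ => Fin d) _ _).symm⟩
  left_inv y := by
    ext1; ext1
    change Fin.cons (y.1.val 0) (Fin.init x.val) = y.1.val
    rw [dbShift_iff.1 y.2, Fin.cons_self_tail]
  right_inv a := Subtype.ext (by simp)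

theorem card_dbVtx_head_eq_succ {k : ℕ} (c : Fin d)
    (hk : ∀ y : dbVtx d t (n + 1), Fintype.card {a // dbAppendable t y.val a} = k) :
    Fintype.card {x : dbVtx d t (n + 2) // x.val 0 = c} =
      Fintype.card {y : dbVtx d t (n + 1) // y.val 0 = c} * k := by
  have e : {x : dbVtx d t (n + 2) // x.val 0 = c} ≃
      Σ y : {y : dbVtx d t (n + 1) // y.val 0 = c}, {a // dbAppendable t y.1.val a} :=
    (dbVtxSnocEquiv.subtypeEquiv fun _ => Iff.rfl).trans
      (Equiv.subtypeSigmaEquiv _ fun y : dbVtx d t (n + 1) => y.val 0 = c)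
  rw [Fintype.card_congr e, Fintype.card_sigma]
  simp [hk]

theorem card_dbVtx_one_head_eq (c : Fin d) :
    Fintype.card {x : dbVtx d t 1 // x.val 0 = c} = 1 := by
  refine Fintype.card_eq_one_iff.2 ⟨⟨⟨fun _ => c, fun i j hij => ?_⟩, rfl⟩, fun x => ?_⟩
  · exact absurd hij (by simp [Subsingleton.elim i j])
  · exact Subtype.ext (Subtype.ext (funext fun i => Fin.fin_one_eq_zero i ▸ x.2))

theorem gammaUndir_le_ncard {S : Set (dbVtx d t n)} (hS : dbUndirDominating S) :
    gammaUndir d t n ≤ S.ncard :=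
  Nat.sInf_le ⟨S, S.toFinite, rfl, hS⟩

theorem exists_dbUndirDominating_ncard_eq_gammaUndir :
    ∃ S : Set (dbVtx d t n), S.ncard = gammaUndir d t n ∧ dbUndirDominating S := by
  obtain ⟨S, -, hS, hdom⟩ := Nat.sInf_mem
    ⟨_, Set.univ, Set.finite_univ, rfl, fun v => ⟨v, trivial, Or.inl rfl⟩⟩ (s :=
      {k | ∃ S : Set (dbVtx d t n), S.Finite ∧ S.ncard = k ∧ dbUndirDominating S})
  exact ⟨S, hS, hdom⟩

end General

section Three

variable {d n : ℕ}

theorem dbAppendable_three_iff {y : Fin (n + 2) → Fin d} {a : Fin d} :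
    dbAppendable 3 y a ↔ a ≠ y (Fin.last (n + 1)) ∧ a ≠ y (Fin.last n).castSucc := by
  have hfar : ∀ i : Fin n, 3 ≤ n + 2 - i := fun i => by omega
  simp [dbAppendable, Fin.forall_fin_succ', hfar, eq_comm, and_comm]

theorem dbAppendable_three_iff_of_fin_one {y : Fin 1 → Fin d} {a : Fin d} :
    dbAppendable 3 y a ↔ a ≠ y 0 := by
  simp [dbAppendable, eq_comm]

theorem dbPrependable_three_iff {y : Fin (n + 2) → Fin d} {a : Fin d} :
    dbPrependable 3 y a ↔ a ≠ y 0 ∧ a ≠ y 1 := by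
  simp [dbPrependable, Fin.forall_fin_succ, eq_comm]

theorem card_dbAppendable_three {y : Fin (n + 2) → Fin d} (hy : dbConstrained d 3 (n + 2) y) :
    Fintype.card {a // dbAppendable 3 y a} = d - 2 := by
  have hne : y (Fin.last (n + 1)) ≠ y (Fin.last n).castSucc := fun h => by
    simpa using hy _ _ (Fin.castSucc_lt_last _) h.symm
  rw [Fintype.card_congr (Equiv.subtypeEquivRight fun _ => dbAppendable_three_iff),
    Fintype.card_subtype_ne_and_ne hne, Fintype.card_fin]

theorem card_dbPrependable_three {y : Fin (n + 2) → Fin d} (hy : dbConstrained d 3 (n + 2) y) :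
    Fintype.card {a // dbPrependable 3 y a} = d - 2 := by
  have hne : y 0 ≠ y 1 := fun h => by simpa using hy 0 1 (by simp) h
  rw [Fintype.card_congr (Equiv.subtypeEquivRight fun _ => dbPrependable_three_iff),
    Fintype.card_subtype_ne_and_ne hne, Fintype.card_fin]

theorem card_dbAppendable_three_of_fin_one (y : Fin 1 → Fin d) :
    Fintype.card {a // dbAppendable 3 y a} = d - 1 := by
  rw [Fintype.card_congr (Equiv.subtypeEquivRight fun _ => dbAppendable_three_iff_of_fin_one)]
  simp

theorem card_dbVtx_three_head_eq (c : Fin d) (n : ℕ) :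
    Fintype.card {x : dbVtx d 3 (n + 2) // x.val 0 = c} = (d - 1) * (d - 2) ^ n := by
  induction n with
  | zero =>
    rw [card_dbVtx_head_eq_succ c fun y => card_dbAppendable_three_of_fin_one y.val,
      card_dbVtx_one_head_eq]
    simp
  | succ n ih =>
    rw [card_dbVtx_head_eq_succ c fun y => card_dbAppendable_three y.2, ih, pow_succ, mul_assoc]

theorem ncard_setOf_head_eq_three (c : Fin d) :
    {x : dbVtx d 3 (n + 2) | x.val 0 = c}.ncard = (d - 1) * (d - 2) ^ n := by
  rw [← Nat.card_coe_set_eq, Set.coe_ofPred, Nat.card_eq_fintype_card, card_dbVtx_three_head_eq]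

theorem card_dbVtx_three (d n : ℕ) :
    Fintype.card (dbVtx d 3 (n + 2)) = d * (d - 1) * (d - 2) ^ n := by
  rw [← Fintype.card_congr (Equiv.sigmaFiberEquiv fun x : dbVtx d 3 (n + 2) => x.val 0),
    Fintype.card_sigma]
  simp [card_dbVtx_three_head_eq, mul_assoc]

theorem card_filter_dbShift_out_three (x : dbVtx d 3 (n + 3)) :
    (univ.filter (dbShift x)).card = d - 2 := by
  rw [← Fintype.card_subtype, Fintype.card_congr (dbShiftOutEquiv x),
    card_dbAppendable_three (dbConstrained_iff_tail.1 x.2).1]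

theorem card_filter_dbShift_in_three (x : dbVtx d 3 (n + 3)) :
    (univ.filter fun y => dbShift y x).card = d - 2 := by
  rw [← Fintype.card_subtype, Fintype.card_congr (dbShiftInEquiv x),
    card_dbPrependable_three (dbConstrained_iff_init.1 x.2).1]

theorem card_closedNbhd_three_le (hd : 2 ≤ d) (x : dbVtx d 3 (n + 3)) :
    (univ.filter fun y => x = y ∨ dbAdj x y).card ≤ 2 * d - 3 := by
  have hsub : (univ.filter fun y => x = y ∨ dbAdj x y) ⊆
      insert x ((univ.filter (dbShift x)) ∪ univ.filter fun y => dbShift y x) := by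
    rintro y hy
    rcases (mem_filter.1 hy).2 with rfl | ⟨-, hxy | hyx⟩ <;> simp [*]
  calc _ ≤ _ := card_le_card hsub
    _ ≤ (univ.filter (dbShift x)).card + (univ.filter fun y => dbShift y x).card + 1 :=
      (card_insert_le _ _).trans (Nat.add_le_add_right (card_union_le _ _) 1)
    _ = 2 * d - 3 := by
      rw [card_filter_dbShift_out_three, card_filter_dbShift_in_three]
      omega

theorem card_dbVtx_three_le_ncard_mul (hd : 2 ≤ d) {S : Set (dbVtx d 3 (n + 3))}
    (hS : dbUndirDominating S) : Fintype.card (dbVtx d 3 (n + 3)) ≤ S.ncard * (2 * d - 3) := by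
  classical
  rw [Set.ncard_eq_toFinset_card']
  refine Fintype.card_le_card_mul_of_forall_exists_mem
    (fun s => univ.filter fun y => s = y ∨ dbAdj s y) S.toFinset (fun v => ?_)
    (fun s _ => card_closedNbhd_three_le hd s)
  obtain ⟨s, hs, hsv⟩ := hS v
  exact ⟨s, Set.mem_toFinset.2 hs, mem_filter.2 ⟨mem_univ v, hsv⟩⟩

theorem dbUndirDominating_setOf_head_eq (hd : 3 ≤ d) (c : Fin d) :
    dbUndirDominating {x : dbVtx d 3 (n + 2) | x.val 0 = c} := by
  intro v
  by_cases h0 : v.val 0 = c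
  · exact ⟨v, h0, Or.inl rfl⟩
  have hne : ∀ s : dbVtx d 3 (n + 2), s.val 0 = c → s ≠ v := fun s hs h => h0 (h ▸ hs)
  by_cases h1 : v.val 1 = c
  · obtain ⟨a, ha⟩ := exists_dbAppendable (t := 3) (by omega) (Fin.tail v.val)
    let s : dbVtx d 3 (n + 2) := ⟨Fin.snoc (Fin.tail v.val) a,
      dbConstrained_snoc_iff.2 ⟨(dbConstrained_iff_tail.1 v.2).1, ha⟩⟩
    have hs : s.val 0 = c := by simpa [s, Fin.tail] using h1
    have hvs : dbShift v s := dbShift_iff.2 (Fin.init_snoc (α := fun _ => Fin d) _ _)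
    exact ⟨s, hs, Or.inr ⟨hne s hs, Or.inr hvs⟩⟩
  · have hc : dbPrependable 3 (Fin.init v.val) c := by
      rintro ⟨_ | _ | i, hi⟩ h
      · exact absurd h h0
      · exact absurd h h1
      · simp
    let s : dbVtx d 3 (n + 2) := ⟨Fin.cons c (Fin.init v.val),
      dbConstrained_cons_iff.2 ⟨(dbConstrained_iff_init.1 v.2).1, hc⟩⟩
    have hs : s.val 0 = c := by simp [s]
    have hsv : dbShift s v := dbShift_iff.2 (Fin.tail_cons (α := fun _ => Fin d) _ _).symm
    exact ⟨s, hs, Or.inr ⟨hne s hs, Or.inl hsv⟩⟩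

end Three

/-- `d(d-1)(d-2)^(n-2)/(2d-3) ≤ γ(cDB(d,3,n)) ≤ (d-1)(d-2)^(n-2)`. -/
theorem gammaUndir_three_bounds (d n : ℕ) (hd : 3 ≤ d) (hn : 4 ≤ n) :
    (d : ℚ) * ((d : ℚ) - 1) * ((d : ℚ) - 2) ^ (n - 2) / (2 * (d : ℚ) - 3)
      ≤ (gammaUndir d 3 n : ℚ) ∧
    gammaUndir d 3 n ≤ (d - 1) * (d - 2) ^ (n - 2) := by
  obtain ⟨m, rfl⟩ : ∃ m, n = m + 3 := ⟨n - 3, by omega⟩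
  refine ⟨?_, ?_⟩
  · obtain ⟨S, hSγ, hS⟩ :=
      exists_dbUndirDominating_ncard_eq_gammaUndir (d := d) (t := 3) (n := m + 3)
    have hlower := card_dbVtx_three_le_ncard_mul (by omega) hS
    rw [card_dbVtx_three, hSγ] at hlower
    have hd' : (3 : ℚ) ≤ d := by exact_mod_cast hd
    rw [div_le_iff₀ (by linarith)]
    have hlowerℚ := (Nat.cast_le (α := ℚ)).2 hlower
    push_cast [Nat.cast_sub (by omega : 1 ≤ d), Nat.cast_sub (by omega : 2 ≤ d),
      Nat.cast_sub (by omega : 3 ≤ 2 * d)] at hlowerℚ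
    exact hlowerℚ
  · have hdom := dbUndirDominating_setOf_head_eq (n := m + 1) hd ⟨0, by omega⟩
    exact (gammaUndir_le_ncard hdom).trans_eq (ncard_setOf_head_eq_three _)
end

section
/- For all integers d, t, n with 2 ≤ t ≤ d and t < n, the domination number of the directed t-constrained de Bruijn graph satisfies (d!/(d−t)!) · (d−t+1)^{n−t}/(d−t+2) ≤ γ(cDB⁺(d,t,n)) ≤ ((d−1) · (d−1)!/(d−t)!) · (d−t+1)^{n−t−1}. -/
attribute [local instance] Classical.propDecidable

instance (d t n : ℕ) : DecidablePred (dbConstrained d t n) := fun _ => by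
  unfold dbConstrained; infer_instance

/-- Valid extension of a constrained word by one last symbol. -/
def dbExtOK (d t m : ℕ) (p : Fin m → Fin d) (c : Fin d) : Prop :=
  ∀ i : Fin m, p i = c → t ≤ m - (i : ℕ)

instance (d t m : ℕ) (p : Fin m → Fin d) : DecidablePred (dbExtOK d t m p) := fun _ => by
  unfold dbExtOK; infer_instance

lemma snoc_eval_lt {α : Type*} {m : ℕ} (p : Fin m → α) (c : α) (i : Fin (m+1))
    (h : (i : ℕ) < m) : (Fin.snoc p c : Fin (m+1) → α) i = p ⟨i, h⟩ := by
  have hi : i = Fin.castSucc ⟨(i : ℕ), h⟩ := by ext; rfl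
  simpa [← hi] using Fin.snoc_castSucc (α := fun _ => α) c p ⟨(i : ℕ), h⟩

lemma snoc_eval_last {α : Type*} {m : ℕ} (p : Fin m → α) (c : α) (i : Fin (m+1))
    (h : (i : ℕ) = m) : (Fin.snoc p c : Fin (m+1) → α) i = c := by
  have hi : i = Fin.last m := by ext; simpa
  rw [hi, Fin.snoc_last]

lemma dbConstrained_snoc {d t m : ℕ} (p : Fin m → Fin d) (c : Fin d) :
    dbConstrained d t (m+1) (Fin.snoc p c) ↔ dbConstrained d t m p ∧ dbExtOK d t m p c := by
  constructor
  · intro h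
    refine ⟨fun i j hij he => ?_, fun i he => ?_⟩
    · have := h i.castSucc j.castSucc (by simpa using hij)
        (by rwa [Fin.snoc_castSucc, Fin.snoc_castSucc])
      simpa using this
    · have hlt : i.castSucc < Fin.last m := by
        simp [Fin.lt_def]
      have := h i.castSucc (Fin.last m) hlt
        (by rwa [Fin.snoc_castSucc, Fin.snoc_last])
      simpa using this
  · rintro ⟨hp, he⟩ i j hij heq
    rcases lt_or_eq_of_le (Nat.lt_succ_iff.mp j.isLt) with hj | hj
    · have hi : (i : ℕ) < m := lt_trans hij hj
      rw [snoc_eval_lt p c i hi, snoc_eval_lt p c j hj] at heq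
      exact hp ⟨i, hi⟩ ⟨j, hj⟩ hij heq
    · have hi : (i : ℕ) < m := by omega
      rw [snoc_eval_lt p c i hi, snoc_eval_last p c j hj] at heq
      have h3 : t ≤ m - (i : ℕ) := he ⟨(i : ℕ), hi⟩ heq
      omega

open Finset in
lemma card_filter_ge (m a : ℕ) :
    (univ.filter (fun i : Fin m => a ≤ (i : ℕ))).card = m - a := by
  rw [← Nat.card_Ico a m, ← Finset.card_image_of_injOn (f := Fin.val)
    (Fin.val_injective.injOn)]
  congr 1
  ext k
  simp only [Finset.mem_image, Finset.mem_filter, Finset.mem_univ, true_and, Finset.mem_Ico]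
  constructor
  · rintro ⟨i, hi, rfl⟩; exact ⟨hi, i.isLt⟩
  · rintro ⟨h1, h2⟩; exact ⟨⟨k, h2⟩, h1, rfl⟩

open Finset in
lemma card_ext {d t m : ℕ} (ht : 1 ≤ t) {p : Fin m → Fin d}
    (hp : dbConstrained d t m p) :
    Nat.card {c : Fin d // dbExtOK d t m p c} = d - min m (t-1) := by
  classical
  set I : Finset (Fin m) := univ.filter (fun i => m - (i : ℕ) < t) with hI
  have hIcard : I.card = min m (t-1) := by
    have : I = univ.filter (fun i : Fin m => (m - (t-1)) ≤ (i : ℕ)) := by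
      ext i; simp only [hI, mem_filter, mem_univ, true_and]
      have := i.isLt; omega
    rw [this, card_filter_ge]; omega
  have hinj : Set.InjOn p I := by
    intro i hi j hj heq
    simp only [hI, coe_filter, Set.mem_setOf_eq, mem_univ, true_and] at hi hj
    rcases lt_trichotomy i j with h | h | h
    · have h1 := hp i j h heq
      have h2 : (i:ℕ) < (j:ℕ) := h
      have := i.isLt; have := j.isLt
      exfalso; omega
    · exact h
    · have h1 := hp j i h heq.symm
      have h2 : (j:ℕ) < (i:ℕ) := h
      have := i.isLt; have := j.isLt
      exfalso; omega
  set B : Finset (Fin d) := I.image p with hB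
  have hBcard : B.card = min m (t-1) := by rw [hB, Finset.card_image_of_injOn hinj, hIcard]
  have hiff : ∀ c, dbExtOK d t m p c ↔ c ∈ Bᶜ := by
    intro c
    simp only [Finset.mem_compl, hB, Finset.mem_image, hI, mem_filter, mem_univ, true_and,
      not_exists, not_and, dbExtOK]
    constructor
    · intro h i hi hpc
      have := h i hpc; omega
    · intro h i hpc
      by_contra hc
      exact h i (by omega) hpc
  calc Nat.card {c : Fin d // dbExtOK d t m p c}
      = Nat.card {c : Fin d // c ∈ Bᶜ} := by
        exact Nat.card_congr (Equiv.subtypeEquivRight hiff)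
    _ = Bᶜ.card := by rw [Nat.card_eq_fintype_card, Fintype.card_coe]
    _ = d - min m (t-1) := by rw [Finset.card_compl, hBcard, Fintype.card_fin]

open Finset in
lemma card_constrained (d t : ℕ) (ht : 1 ≤ t) (Q : Fin d → Prop) [DecidablePred Q] :
    ∀ m (hm : 1 ≤ m), Nat.card {x : Fin m → Fin d // dbConstrained d t m x ∧ Q (x ⟨0, hm⟩)} =
      Nat.card {a : Fin d // Q a} * ∏ i ∈ Finset.Ico 1 m, (d - min i (t-1)) := by
  refine Nat.le_induction ?_ ?_
  · -- base case m = 1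
    have e : {x : Fin 1 → Fin d // dbConstrained d t 1 x ∧ Q (x ⟨0, Nat.one_pos⟩)} ≃
        {a : Fin d // Q a} :=
      { toFun := fun x => ⟨x.1 ⟨0, Nat.one_pos⟩, x.2.2⟩
        invFun := fun a => ⟨fun _ => a.1, ⟨fun i j hij _ => by
          have h2 : (i:ℕ) < (j:ℕ) := hij
          have := i.isLt; have := j.isLt; omega, a.2⟩⟩
        left_inv := fun x => by
          ext i
          have : i = ⟨0, Nat.one_pos⟩ := Subsingleton.elim i _
          rw [this]
        right_inv := fun a => rfl }
    rw [Nat.card_congr e]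
    simp
  · -- step
    intro m hm IH
    have h0m : (0:ℕ) < m := hm
    set F : (Σ p : {p : Fin m → Fin d // dbConstrained d t m p ∧ Q (p ⟨0, hm⟩)},
        {c : Fin d // dbExtOK d t m p.1 c}) →
        {x : Fin (m+1) → Fin d // dbConstrained d t (m+1) x ∧
          Q (x ⟨0, Nat.succ_pos m⟩)} :=
      fun pc => ⟨Fin.snoc pc.1.1 pc.2.1, by
        rw [dbConstrained_snoc]
        exact ⟨pc.1.2.1, pc.2.2⟩, by
        have h0 : (Fin.snoc pc.1.1 pc.2.1 : Fin (m+1) → Fin d) ⟨0, Nat.succ_pos m⟩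
            = pc.1.1 ⟨0, hm⟩ := snoc_eval_lt _ _ _ h0m
        rw [h0]; exact pc.1.2.2⟩ with hF
    have hbij : Function.Bijective F := by
      constructor
      · rintro ⟨⟨p, hp⟩, ⟨c, hc⟩⟩ ⟨⟨p', hp'⟩, ⟨c', hc'⟩⟩ h
        have h1 : (Fin.snoc p c : Fin (m+1) → Fin d) = Fin.snoc p' c' :=
          congrArg Subtype.val h
        obtain rfl : p = p' := by
          have := congrArg Fin.init h1
          rwa [Fin.init_snoc (α := fun _ => Fin d), Fin.init_snoc (α := fun _ => Fin d)] at this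
        obtain rfl : c = c' := by
          have := congrFun h1 (Fin.last m)
          rwa [Fin.snoc_last (α := fun _ => Fin d), Fin.snoc_last (α := fun _ => Fin d)] at this
        rfl
      · rintro ⟨x, hx, hQ⟩
        have hc : dbConstrained d t m (Fin.init x) ∧ dbExtOK d t m (Fin.init x) (x (Fin.last m)) := by
          rw [← dbConstrained_snoc, Fin.snoc_init_self]
          exact hx
        have hQ' : Q ((Fin.init x) ⟨0, hm⟩) := by
          have : (Fin.init x) ⟨0, hm⟩ = x ⟨0, Nat.succ_pos m⟩ := by
            show x (Fin.castSucc ⟨0, hm⟩) = _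
            congr 1
          rwa [this]
        refine ⟨⟨⟨Fin.init x, hc.1, hQ'⟩, ⟨x (Fin.last m), hc.2⟩⟩, ?_⟩
        simp only [hF]
        exact Subtype.ext (Fin.snoc_init_self x)
    rw [← Nat.card_congr (Equiv.ofBijective F hbij)]
    rw [Nat.card_eq_fintype_card, Fintype.card_sigma]
    have hfib : ∀ p : {p : Fin m → Fin d // dbConstrained d t m p ∧ Q (p ⟨0, hm⟩)},
        Fintype.card {c : Fin d // dbExtOK d t m p.1 c} = d - min m (t-1) := by
      intro p
      rw [← Nat.card_eq_fintype_card]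
      exact card_ext ht p.2.1
    rw [Finset.sum_congr rfl (fun p _ => hfib p), Finset.sum_const, smul_eq_mul]
    rw [Finset.card_univ, ← Nat.card_eq_fintype_card, IH]
    rw [Finset.prod_Ico_succ_top hm]
    ring

attribute [local instance] Classical.propDecidable

open Finset in
lemma shift_card_le {d t n : ℕ} (ht2 : 2 ≤ t) (htd : t ≤ d) (htn : t < n)
    (s : dbVtx d t n) :
    (univ.filter (fun v : dbVtx d t n => dbShift s v)).card ≤ d - t + 1 := by
  classical
  set K : Finset (Fin n) := univ.filter (fun k : Fin n => n - t + 1 ≤ (k : ℕ)) with hK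
  have hKcard : K.card = t - 1 := by
    rw [hK, card_filter_ge]; omega
  have hinj : Set.InjOn s.val K := by
    intro k hk k' hk' heq
    simp only [hK, coe_filter, Set.mem_setOf_eq, mem_univ, true_and] at hk hk'
    rcases lt_trichotomy k k' with h | h | h
    · have h1 := s.2 k k' h heq
      have h2 : (k:ℕ) < (k':ℕ) := h
      have := k'.isLt; exfalso; omega
    · exact h
    · have h1 := s.2 k' k h heq.symm
      have h2 : (k':ℕ) < (k:ℕ) := h
      have := k.isLt; exfalso; omega
  set B : Finset (Fin d) := K.image s.val with hB
  have hBcard : B.card = t - 1 := by rw [hB, Finset.card_image_of_injOn hinj, hKcard]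
  have hlast : n - 1 < n := by omega
  have hmaps : ∀ v ∈ univ.filter (fun v : dbVtx d t n => dbShift s v),
      v.val ⟨n-1, hlast⟩ ∈ Bᶜ := by
    intro v hv
    rw [mem_filter] at hv
    have hsh := hv.2
    rw [Finset.mem_compl]
    intro hmem
    rw [hB, Finset.mem_image] at hmem
    obtain ⟨k, hkK, hks⟩ := hmem
    rw [hK, mem_filter] at hkK
    have hk1 : 1 ≤ (k : ℕ) := by omega
    have hkn : (k : ℕ) < n := k.isLt
    have hstep : v.val ⟨(k:ℕ) - 1, by omega⟩ = s.val ⟨((k:ℕ) - 1) + 1, by omega⟩ :=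
      hsh ⟨(k:ℕ) - 1, by omega⟩ (show (k:ℕ) - 1 + 1 < n by omega)
    have hkk : (⟨((k:ℕ) - 1) + 1, by omega⟩ : Fin n) = k := by ext; simp; omega
    rw [hkk, hks] at hstep
    -- v.val ⟨k-1⟩ = v.val ⟨n-1⟩
    have hlt : ((⟨(k:ℕ) - 1, by omega⟩ : Fin n) : ℕ) < ((⟨n-1, hlast⟩ : Fin n) : ℕ) := by
      simp; omega
    have h9 : t ≤ (n-1) - ((k:ℕ) - 1) :=
      v.2 ⟨(k:ℕ) - 1, by omega⟩ ⟨n-1, hlast⟩ hlt hstep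
    omega
  have hinj2 : Set.InjOn (fun v : dbVtx d t n => v.val ⟨n-1, hlast⟩)
      ↑(univ.filter (fun v : dbVtx d t n => dbShift s v)) := by
    intro v hv w hw heq
    rw [Finset.mem_coe, mem_filter] at hv hw
    simp only [] at heq
    refine Subtype.ext (funext fun i => ?_)
    rcases lt_or_eq_of_le (Nat.lt_succ_iff.mp (by omega : (i:ℕ) < (n-1) + 1)) with h | h
    · rw [hv.2 i (by omega), hw.2 i (by omega)]
    · have : i = ⟨n-1, hlast⟩ := by ext; exact h
      rw [this]; exact heq
  calc (univ.filter (fun v : dbVtx d t n => dbShift s v)).card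
      ≤ Bᶜ.card := Finset.card_le_card_of_injOn _ hmaps hinj2
    _ = d - (t-1) := by rw [Finset.card_compl, hBcard, Fintype.card_fin]
    _ = d - t + 1 := by omega

open Finset in
lemma card_le_of_dominating {d t n : ℕ} (ht2 : 2 ≤ t) (htd : t ≤ d) (htn : t < n)
    (S : Set (dbVtx d t n)) (hfin : S.Finite) (hdom : dbDirDominating S) :
    Nat.card (dbVtx d t n) ≤ (d - t + 2) * S.ncard := by
  classical
  have hcov : (univ : Finset (dbVtx d t n)) ⊆
      hfin.toFinset.biUnion (fun s => univ.filter (fun v => s = v ∨ dbShift s v)) := by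
    intro v _
    obtain ⟨s, hs, hd⟩ := hdom v
    exact Finset.mem_biUnion.mpr ⟨s, hfin.mem_toFinset.mpr hs, by simp [hd]⟩
  have hone : ∀ s : dbVtx d t n,
      (univ.filter (fun v => s = v ∨ dbShift s v)).card ≤ d - t + 2 := by
    intro s
    have hsub : univ.filter (fun v => s = v ∨ dbShift s v) ⊆
        insert s (univ.filter (fun v : dbVtx d t n => dbShift s v)) := by
      intro v hv
      rw [mem_filter] at hv
      rcases hv.2 with h | h
      · rw [← h]; exact Finset.mem_insert_self _ _
      · exact Finset.mem_insert_of_mem (by simp [h])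
    calc (univ.filter (fun v => s = v ∨ dbShift s v)).card
        ≤ (insert s (univ.filter (fun v : dbVtx d t n => dbShift s v))).card :=
          Finset.card_le_card hsub
      _ ≤ (univ.filter (fun v : dbVtx d t n => dbShift s v)).card + 1 :=
          Finset.card_insert_le _ _
      _ ≤ (d - t + 1) + 1 := by
          have := shift_card_le ht2 htd htn s; omega
      _ = d - t + 2 := by omega
  calc Nat.card (dbVtx d t n) = (univ : Finset (dbVtx d t n)).card := by
        rw [Nat.card_eq_fintype_card, Finset.card_univ]
    _ ≤ ∑ s ∈ hfin.toFinset, (univ.filter (fun v => s = v ∨ dbShift s v)).card :=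
        le_trans (Finset.card_le_card hcov) (Finset.card_biUnion_le)
    _ ≤ ∑ _s ∈ hfin.toFinset, (d - t + 2) := Finset.sum_le_sum (fun s _ => hone s)
    _ = (d - t + 2) * S.ncard := by
        rw [Finset.sum_const, smul_eq_mul, Set.ncard_eq_toFinset_card S hfin, mul_comm]

/-- Prepend a symbol to a word of length `n-1`, giving a word of length `n`. -/
def dbPrep {d n : ℕ} (c : Fin d) (q : Fin (n-1) → Fin d) : Fin n → Fin d :=
  fun i => if h : (i : ℕ) = 0 then c else q ⟨(i:ℕ) - 1, by have := i.isLt; omega⟩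

lemma dbPrep_zero {d n : ℕ} (c : Fin d) (q : Fin (n-1) → Fin d) (i : Fin n)
    (h : (i : ℕ) = 0) : dbPrep c q i = c := by simp [dbPrep, h]

lemma dbPrep_pos {d n : ℕ} (c : Fin d) (q : Fin (n-1) → Fin d) (i : Fin n)
    (h : (i : ℕ) ≠ 0) :
    dbPrep c q i = q ⟨(i:ℕ) - 1, by have := i.isLt; omega⟩ := by simp [dbPrep, h]

/-- `c` is a valid symbol to prepend to `q`. -/
def dbPrepOK (d t n : ℕ) (q : Fin (n-1) → Fin d) (c : Fin d) : Prop :=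
  ∀ j : Fin (n-1), q j = c → t ≤ (j : ℕ) + 1

lemma dbConstrained_prep {d t n : ℕ} (hn : 1 ≤ n) (c : Fin d) (q : Fin (n-1) → Fin d) :
    dbConstrained d t n (dbPrep c q) ↔
      dbConstrained d t (n-1) q ∧ dbPrepOK d t n q c := by
  constructor
  · intro h
    refine ⟨fun i j hij he => ?_, fun j he => ?_⟩
    · have h2 : (i:ℕ) < (j:ℕ) := hij
      have hi := i.isLt; have hj := j.isLt
      have h3 : t ≤ ((j:ℕ)+1) - ((i:ℕ)+1) :=
        h ⟨(i:ℕ)+1, by omega⟩ ⟨(j:ℕ)+1, by omega⟩ (Fin.mk_lt_mk.mpr (by omega))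
          (by rw [dbPrep_pos c q _ (by simp), dbPrep_pos c q _ (by simp)]
              show q ⟨(i:ℕ)+1-1, by omega⟩ = q ⟨(j:ℕ)+1-1, by omega⟩
              convert he using 3 <;> omega)
      omega
    · have hj := j.isLt
      have h3 : t ≤ ((j:ℕ)+1) - 0 :=
        h ⟨0, by omega⟩ ⟨(j:ℕ)+1, by omega⟩ (Fin.mk_lt_mk.mpr (by omega))
          (by rw [dbPrep_zero c q _ (by simp), dbPrep_pos c q _ (by simp)]
              show c = q ⟨(j:ℕ)+1-1, by omega⟩
              rw [← he]
              rfl)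
      omega
  · rintro ⟨hq, hc⟩ i j hij he
    have h2 : (i:ℕ) < (j:ℕ) := hij
    have hjn := j.isLt
    rcases Nat.eq_zero_or_pos (i:ℕ) with h0 | h0
    · rw [dbPrep_zero c q i h0, dbPrep_pos c q j (by omega)] at he
      have h3 : t ≤ ((j:ℕ)-1) + 1 := hc ⟨(j:ℕ)-1, by omega⟩ he.symm
      omega
    · rw [dbPrep_pos c q i (by omega), dbPrep_pos c q j (by omega)] at he
      have h3 : t ≤ ((j:ℕ)-1) - ((i:ℕ)-1) :=
        hq ⟨(i:ℕ)-1, by omega⟩ ⟨(j:ℕ)-1, by omega⟩ (Fin.mk_lt_mk.mpr (by omega)) he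
      omega

open Finset in
lemma exists_prepOK {d t n : ℕ} (ht2 : 2 ≤ t) (htd : t ≤ d) (htn : t < n)
    (q : Fin (n-1) → Fin d) (hq : dbConstrained d t (n-1) q) :
    ∃ c : Fin d, dbPrepOK d t n q c := by
  classical
  set J : Finset (Fin (n-1)) := univ.filter (fun j => (j:ℕ) < t - 1) with hJ
  have hJcard : J.card ≤ t - 1 := by
    have hmaps : ∀ j ∈ J, (j:ℕ) ∈ Finset.range (t-1) := by
      intro j hj; rw [hJ, mem_filter] at hj; simpa using hj.2
    calc J.card ≤ (Finset.range (t-1)).card :=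
          Finset.card_le_card_of_injOn Fin.val hmaps (Fin.val_injective.injOn)
      _ = t - 1 := Finset.card_range _
  set B : Finset (Fin d) := J.image q with hB
  have hBlt : B.card < d := by
    calc B.card ≤ J.card := Finset.card_image_le
      _ ≤ t - 1 := hJcard
      _ < d := by omega
  have hne : Bᶜ.Nonempty := by
    rw [← Finset.card_pos, Finset.card_compl, Fintype.card_fin]; omega
  obtain ⟨c, hc⟩ := hne
  rw [Finset.mem_compl] at hc
  refine ⟨c, fun j hjc => ?_⟩
  by_contra hcon
  apply hc
  rw [hB, Finset.mem_image]
  exact ⟨j, by rw [hJ, mem_filter]; exact ⟨mem_univ _, by omega⟩, hjc⟩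

lemma upper_dom {d t n : ℕ} (ht2 : 2 ≤ t) (htd : t ≤ d) (htn : t < n) :
    ∃ S : Set (dbVtx d t n), S.Finite ∧ dbDirDominating S ∧
      S.ncard ≤ Nat.card {q : Fin (n-1) → Fin d //
        dbConstrained d t (n-1) q ∧ q ⟨0, by omega⟩ ≠ ⟨0, by omega⟩} := by
  classical
  have hn3 : 3 ≤ n := by omega
  have hex : ∀ q : Fin (n-1) → Fin d, dbConstrained d t (n-1) q →
      ∃ c : Fin d, dbPrepOK d t n q c ∧ (dbPrepOK d t n q ⟨0, by omega⟩ → c = ⟨0, by omega⟩) := by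
    intro q hq
    by_cases h0 : dbPrepOK d t n q ⟨0, by omega⟩
    · exact ⟨⟨0, by omega⟩, h0, fun _ => rfl⟩
    · obtain ⟨c, hc⟩ := exists_prepOK ht2 htd htn q hq
      exact ⟨c, hc, fun h => absurd h h0⟩
  choose cho hcho1 hcho2 using hex
  set F : {q : Fin (n-1) → Fin d //
      dbConstrained d t (n-1) q ∧ q ⟨0, by omega⟩ ≠ ⟨0, by omega⟩} → dbVtx d t n := fun q =>
    ⟨dbPrep (cho q.1 q.2.1) q.1,
      (dbConstrained_prep (by omega) _ _).mpr ⟨q.2.1, hcho1 q.1 q.2.1⟩⟩ with hF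
  refine ⟨Set.range F, Set.toFinite _, ?_, ?_⟩
  · -- dominating
    intro v
    by_cases hv0 : v.val ⟨0, by omega⟩ = ⟨0, by omega⟩
    · -- v is itself in S
      set q : Fin (n-1) → Fin d := fun j => v.val ⟨(j:ℕ)+1, by have := j.isLt; omega⟩
        with hq
      have hqc : dbConstrained d t (n-1) q := by
        intro i j hij he
        have h2 : (i:ℕ) < (j:ℕ) := hij
        have hj := j.isLt
        have h3 : t ≤ ((j:ℕ)+1) - ((i:ℕ)+1) :=
          v.2 ⟨(i:ℕ)+1, by omega⟩ ⟨(j:ℕ)+1, by omega⟩ (Fin.mk_lt_mk.mpr (by omega)) he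
        omega
      have hq0 : q ⟨0, by omega⟩ ≠ ⟨0, by omega⟩ := by
        intro hcon
        have h3 : t ≤ 1 - 0 :=
          v.2 ⟨0, by omega⟩ ⟨1, by omega⟩ (Fin.mk_lt_mk.mpr (by omega))
            (by rw [hv0]
                exact hcon.symm)
        omega
      have hok0 : dbPrepOK d t n q ⟨0, by omega⟩ := by
        intro j hj
        have hjlt := j.isLt
        have h3 : t ≤ ((j:ℕ)+1) - 0 :=
          v.2 ⟨0, by omega⟩ ⟨(j:ℕ)+1, by omega⟩ (Fin.mk_lt_mk.mpr (by omega))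
            (by rw [hv0]; exact hj.symm)
        omega
      have hc0 : cho q hqc = ⟨0, by omega⟩ := hcho2 q hqc hok0
      refine ⟨F ⟨q, hqc, hq0⟩, Set.mem_range_self _, Or.inl ?_⟩
      apply Subtype.ext
      funext i
      show dbPrep (cho q hqc) q i = v.val i
      rcases Nat.eq_zero_or_pos (i:ℕ) with h0 | h0
      · have hvi : v.val i = v.val ⟨0, by omega⟩ := by
          rw [Fin.ext (b := (⟨0, by omega⟩ : Fin n)) h0]
        rw [dbPrep_zero _ _ _ h0, hc0, hvi]
        exact hv0.symm
      · have hilt := i.isLt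
        rw [dbPrep_pos _ _ _ (by omega)]
        show v.val ⟨((i:ℕ)-1)+1, by omega⟩ = v.val i
        rw [Fin.ext (a := (⟨((i:ℕ)-1)+1, by omega⟩ : Fin n)) (b := i) (by
          show (i:ℕ)-1+1 = (i:ℕ)
          omega)]
    · -- v is dominated by its predecessor
      set q : Fin (n-1) → Fin d := fun j => v.val ⟨(j:ℕ), by have := j.isLt; omega⟩
        with hq
      have hqc : dbConstrained d t (n-1) q := by
        intro i j hij he
        have h2 : (i:ℕ) < (j:ℕ) := hij
        have hj := j.isLt
        have h3 : t ≤ (j:ℕ) - (i:ℕ) :=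
          v.2 ⟨(i:ℕ), by omega⟩ ⟨(j:ℕ), by omega⟩ (Fin.mk_lt_mk.mpr (by omega)) he
        omega
      have hq0 : q ⟨0, by omega⟩ ≠ ⟨0, by omega⟩ := hv0
      refine ⟨F ⟨q, hqc, hq0⟩, Set.mem_range_self _, Or.inr ?_⟩
      intro i h
      show v.val i = dbPrep (cho q hqc) q ⟨(i:ℕ)+1, h⟩
      rw [dbPrep_pos _ _ _ (by simp)]
      show v.val i = v.val ⟨(i:ℕ)+1-1, by omega⟩
      rfl
  · -- cardinality
    calc (Set.range F).ncard = (F '' Set.univ).ncard := by rw [Set.image_univ]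
      _ ≤ (Set.univ : Set _).ncard := Set.ncard_image_le (Set.toFinite _)
      _ = Nat.card _ := Set.ncard_univ _

open Finset in
lemma prod_min_eval (d t M : ℕ) (ht2 : 2 ≤ t) (htd : t ≤ d) (htM : t ≤ M) :
    ∏ i ∈ Finset.Ico 1 M, (d - min i (t-1)) =
      (d-1).descFactorial (t-1) * (d-t+1)^(M-t) := by
  rw [← Finset.prod_Ico_consecutive _ (show (1:ℕ) ≤ t by omega) htM]
  congr 1
  · rw [Nat.descFactorial_eq_prod_range, Finset.prod_Ico_eq_prod_range]
    apply Finset.prod_congr rfl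
    intro k hk
    rw [Finset.mem_range] at hk
    have : min (1+k) (t-1) = 1+k := by omega
    rw [this]; omega
  · have hconst : ∀ i ∈ Finset.Ico t M, d - min i (t-1) = d - t + 1 := by
      intro i hi
      rw [Finset.mem_Ico] at hi
      have : min i (t-1) = t - 1 := by omega
      rw [this]; omega
    rw [Finset.prod_congr rfl hconst, Finset.prod_const, Nat.card_Ico]

lemma desc_succ (d t : ℕ) (hd : 1 ≤ d) (ht : 1 ≤ t) :
    d.descFactorial t = d * (d-1).descFactorial (t-1) := by
  obtain ⟨d', rfl⟩ : ∃ d', d = d'+1 := ⟨d-1, by omega⟩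
  obtain ⟨t', rfl⟩ : ∃ t', t = t'+1 := ⟨t-1, by omega⟩
  simp only [Nat.add_sub_cancel]
  rw [Nat.succ_descFactorial_succ]

lemma card_dbVtx (d t n : ℕ) (ht2 : 2 ≤ t) (htd : t ≤ d) (htn : t ≤ n) :
    Nat.card (dbVtx d t n) = d.descFactorial t * (d-t+1)^(n-t) := by
  classical
  have hn : 1 ≤ n := by omega
  have h1 := card_constrained d t (by omega) (fun _ : Fin d => True) n hn
  have h2 : Nat.card (dbVtx d t n) =
      Nat.card {x : Fin n → Fin d // dbConstrained d t n x ∧ True} :=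
    Nat.card_congr (Equiv.subtypeEquivRight (fun x => by simp))
  have h3 : Nat.card {a : Fin d // True} = d := by
    rw [Nat.card_congr (Equiv.subtypeUnivEquiv (fun a => trivial)),
      Nat.card_eq_fintype_card, Fintype.card_fin]
  rw [h2, h1, h3, prod_min_eval d t n ht2 htd htn, desc_succ d t (by omega) (by omega)]
  ring

lemma card_classes (d t n : ℕ) (ht2 : 2 ≤ t) (htd : t ≤ d) (htn : t < n) :
    Nat.card {q : Fin (n-1) → Fin d //
        dbConstrained d t (n-1) q ∧ q ⟨0, by omega⟩ ≠ ⟨0, by omega⟩}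
      = (d-1) * ((d-1).descFactorial (t-1) * (d-t+1)^(n-1-t)) := by
  classical
  have hm : 1 ≤ n - 1 := by omega
  have hd0 : 0 < d := by omega
  have htm : t ≤ n - 1 := by omega
  have ht1 : 1 ≤ t := by omega
  have h3 : Nat.card {a : Fin d // a ≠ (⟨0, hd0⟩ : Fin d)} = d - 1 := by
    rw [Nat.card_eq_fintype_card, Fintype.card_subtype_compl, Fintype.card_fin,
      Fintype.card_subtype_eq]
  have hprod := prod_min_eval d t (n-1) ht2 htd htm
  have h1 := card_constrained d t ht1 (fun a : Fin d => a ≠ (⟨0, hd0⟩ : Fin d)) (n-1) hm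
  rw [h3, hprod] at h1
  exact h1

/-- for `2 ≤ t ≤ d` and `t < n`,
`(d!/(d-t)!) * (d-t+1)^(n-t)/(d-t+2) ≤ γ(cDB⁺(d,t,n))
  ≤ ((d-1) * (d-1)!/(d-t)!) * (d-t+1)^(n-t-1)`. -/
theorem gammaDir_general_bounds (d t n : ℕ) (ht2 : 2 ≤ t) (htd : t ≤ d) (htn : t < n) :
    (d.factorial : ℚ) / ((d - t).factorial : ℚ) *
        (((d - t + 1) : ℕ) : ℚ) ^ (n - t) / (((d - t + 2) : ℕ) : ℚ)
      ≤ (gammaDir d t n : ℚ) ∧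
    (gammaDir d t n : ℚ) ≤
      (((d - 1) : ℕ) : ℚ) * ((d - 1).factorial : ℚ) / ((d - t).factorial : ℚ) *
        (((d - t + 1) : ℕ) : ℚ) ^ (n - t - 1) := by
  classical
  have htn' : t ≤ n := by omega
  have h2d : 0 < d - t + 2 := by omega
  have h5 : t - 1 ≤ d - 1 := by omega
  have h6 : d - 1 - (t-1) = d - t := by omega
  have hnt : n - t - 1 = n - 1 - t := by omega
  have hfac0 : ((d-t).factorial : ℚ) ≠ 0 := by
    exact_mod_cast (Nat.factorial_pos (d-t)).ne'
  have hfac : (d.factorial : ℚ) / ((d-t).factorial : ℚ) = (d.descFactorial t : ℚ) := by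
    rw [div_eq_iff hfac0]
    exact_mod_cast (Nat.factorial_mul_descFactorial htd).symm.trans (mul_comm _ _)
  have hfac2 : ((d-1).factorial : ℚ) / ((d-t).factorial : ℚ)
      = ((d-1).descFactorial (t-1) : ℚ) := by
    rw [div_eq_iff hfac0]
    have h := Nat.factorial_mul_descFactorial (n := d-1) (k := t-1) h5
    rw [h6] at h
    exact_mod_cast h.symm.trans (mul_comm _ _)
  obtain ⟨S, hfin, hdom, hcard⟩ := upper_dom ht2 htd htn
  have hmem : S.ncard ∈ {k | ∃ S : Set (dbVtx d t n),
      S.Finite ∧ S.ncard = k ∧ dbDirDominating S} := ⟨S, hfin, rfl, hdom⟩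
  have hγu : gammaDir d t n ≤ (d-1) * ((d-1).descFactorial (t-1) * (d-t+1)^(n-1-t)) :=
    le_trans (Nat.sInf_le hmem)
      (le_trans hcard (le_of_eq (card_classes d t n ht2 htd htn)))
  obtain ⟨S₀, hfin₀, hcard₀, hdom₀⟩ := Nat.sInf_mem ⟨S.ncard, hmem⟩
  have hlow : Nat.card (dbVtx d t n) ≤ (d-t+2) * gammaDir d t n := by
    have h := card_le_of_dominating ht2 htd htn S₀ hfin₀ hdom₀
    rwa [hcard₀] at h
  rw [card_dbVtx d t n ht2 htd htn'] at hlow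
  constructor
  · have h0 : (0:ℚ) < ((d-t+2 : ℕ) : ℚ) := by exact_mod_cast h2d
    rw [div_le_iff₀ h0, hfac]
    have hnat : d.descFactorial t * (d-t+1)^(n-t) ≤ gammaDir d t n * (d-t+2) :=
      le_trans hlow (le_of_eq (mul_comm _ _))
    exact_mod_cast hnat
  · rw [mul_div_assoc, hfac2]
    have hnat : gammaDir d t n ≤ (d-1) * ((d-1).descFactorial (t-1) * (d-t+1)^(n-t-1)) := by
      rw [hnt]
      exact hγu
    calc (gammaDir d t n : ℚ)
        ≤ (((d-1) * ((d-1).descFactorial (t-1) * (d-t+1)^(n-t-1)) : ℕ) : ℚ) := by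
          exact_mod_cast hnat
      _ = ((d-1:ℕ):ℚ) * ((d-1).descFactorial (t-1) : ℚ) * (((d-t+1:ℕ):ℚ))^(n-t-1) := by
          push_cast; ring
end

section
/- For every integer n ≥ 2, the domination number of the directed n-constrained de Bruijn graph on n symbols (whose vertices are the permutations of [n]) satisfies γ(cDB⁺(n,n,n)) = ⌈n/2⌉ · (n−1)!. -/
/-!
Writing a vertex as the permutation `σ` of `Fin n` it lists, its only out-neighbour is
`σ * finRotate n`: the missing last symbol is forced. So `cDB⁺(n,n,n)` is the functional digraph
of right multiplication by an `n`-cycle, a disjoint union of `n! / n` directed cycles of length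
`n`. On a directed cycle of length `p` every vertex outside a dominating set has its predecessor
inside it, so the set has at least `⌈p/2⌉` elements, and every second vertex is enough.
-/

open Equiv Function MulAction Subgroup Finset

namespace ZMod
variable {n : ℕ}

theorem card_le_of_forall_mem_or_sub_one_mem [NeZero n] {A : Finset (ZMod n)}
    (hA : ∀ k, k ∈ A ∨ k - 1 ∈ A) : (n + 1) / 2 ≤ #A := by
  have hcompl : #Aᶜ ≤ #A :=
    card_le_card_of_injOn (· - 1) (fun k hk => (hA k).resolve_left (mem_compl.mp hk))
      fun a _ b _ h => sub_left_injective h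
  have hsum : #A + #Aᶜ = n := by rw [card_add_card_compl, ZMod.card]
  omega

variable (n) in
def evenResidues : Finset (ZMod n) :=
  (range ((n + 1) / 2)).image fun j => ((2 * j : ℕ) : ZMod n)

theorem card_evenResidues : #(evenResidues n) = (n + 1) / 2 := by
  refine (card_image_of_injOn fun a ha b hb h => ?_).trans (card_range _)
  simp only [coe_range, Set.mem_Iio] at ha hb
  have := congrArg ZMod.val h
  rw [val_cast_of_lt (by omega), val_cast_of_lt (by omega)] at this
  omega

theorem mem_evenResidues_or_sub_one_mem [NeZero n] (k : ZMod n) :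
    k ∈ evenResidues n ∨ k - 1 ∈ evenResidues n := by
  have hk := k.val_lt
  rw [← natCast_zmod_val k]
  obtain ⟨j, hj | hj⟩ := Nat.even_or_odd' k.val <;> rw [hj]
  · exact .inl (mem_image.mpr ⟨j, mem_range.mpr (by omega), rfl⟩)
  · exact .inr (mem_image.mpr ⟨j, mem_range.mpr (by omega), by push_cast; ring⟩)

end ZMod

theorem sum_le_card_of_forall_mem_or_sub_one_mem {ι : Type*} [Fintype ι] {p : ι → ℕ}
    [∀ i, NeZero (p i)] {T : Finset (Σ i, ZMod (p i))}
    (hT : ∀ i k, ⟨i, k⟩ ∈ T ∨ ⟨i, k - 1⟩ ∈ T) : ∑ i, (p i + 1) / 2 ≤ #T := by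
  classical
  have hfibres : T = univ.sigma fun i => {k | ⟨i, k⟩ ∈ T} := by ext ⟨i, k⟩; simp
  rw [hfibres, card_sigma]
  exact sum_le_sum fun i _ =>
    ZMod.card_le_of_forall_mem_or_sub_one_mem fun k => by simpa using hT i k

namespace Equiv.Perm
variable {α : Type*} (f : Perm α)

/-- `S` dominates the functional digraph `x → f x` of `f`. -/
def IsDominatingSet (S : Set α) : Prop := ∀ x, x ∈ S ∨ f⁻¹ x ∈ S

abbrev Cycles : Type _ := orbitRel.Quotient (zpowers f) α

noncomputable abbrev cycleLength (ω : f.Cycles) : ℕ := minimalPeriod f ω.out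

instance [Finite α] (x : α) : NeZero (minimalPeriod f x) := MulAction.minimalPeriod_pos f x

/-- `x = f ^ k ω.out` has coordinates `⟨ω, k⟩`. -/
noncomputable def cycleCoords : α ≃ Σ ω : f.Cycles, ZMod (f.cycleLength ω) :=
  (selfEquivSigmaOrbits (zpowers f) α).trans
    (Equiv.sigmaCongrRight fun ω => orbitZPowersEquiv f ω.out)

theorem cycleCoords_symm_add_one (ω : f.Cycles) (k : ZMod (f.cycleLength ω)) :
    f.cycleCoords.symm ⟨ω, k + 1⟩ = f (f.cycleCoords.symm ⟨ω, k⟩) := by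
  have hk : k + 1 = ((1 + k.cast : ℤ) : ZMod (f.cycleLength ω)) := by
    push_cast [ZMod.intCast_cast, ZMod.cast_id', id]
    ring
  change ((orbitZPowersEquiv f ω.out).symm (k + 1) : α) = f ((orbitZPowersEquiv f ω.out).symm k)
  rw [hk, orbitZPowersEquiv_symm_apply', orbitZPowersEquiv_symm_apply, zpow_one_add, mul_smul]
  rfl

theorem cycleCoords_symm_sub_one (ω : f.Cycles) (k : ZMod (f.cycleLength ω)) :
    f⁻¹ (f.cycleCoords.symm ⟨ω, k⟩) = f.cycleCoords.symm ⟨ω, k - 1⟩ := by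
  rw [inv_eq_iff_eq, ← cycleCoords_symm_add_one, sub_add_cancel]

section
variable [Finite α] [Fintype f.Cycles]

theorem sum_le_ncard_of_isDominatingSet {S : Set α} (hS : f.IsDominatingSet S) :
    ∑ ω, (f.cycleLength ω + 1) / 2 ≤ S.ncard := by
  classical
  have : Fintype α := Fintype.ofFinite α
  set e := f.cycleCoords
  have hT : (({z | e.symm z ∈ S} : Finset _) : Set _) = e '' S := by
    ext z
    simp [Set.mem_image_equiv]
  rw [← Set.ncard_image_of_injective S e.injective, ← hT, Set.ncard_coe_finset]
  refine sum_le_card_of_forall_mem_or_sub_one_mem fun ω k => ?_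
  simpa [e, cycleCoords_symm_sub_one] using hS (e.symm ⟨ω, k⟩)

theorem exists_isDominatingSet_ncard_eq :
    ∃ S : Set α, f.IsDominatingSet S ∧ S.ncard = ∑ ω, (f.cycleLength ω + 1) / 2 := by
  set e := f.cycleCoords
  refine ⟨e.symm '' ↑(univ.sigma fun ω => ZMod.evenResidues (f.cycleLength ω)), fun x => ?_,
    ?_⟩
  · obtain ⟨⟨ω, k⟩, rfl⟩ := e.symm.surjective x
    simp only [e, cycleCoords_symm_sub_one, Set.mem_image_equiv, symm_symm, apply_symm_apply,
      coe_sigma, Set.mem_sigma_iff, mem_coe, mem_univ, true_and]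
    exact ZMod.mem_evenResidues_or_sub_one_mem k
  · rw [Set.ncard_image_of_injective _ e.symm.injective, Set.ncard_coe_finset, card_sigma]
    simp only [ZMod.card_evenResidues]

end

theorem isLeast_ncard_isDominatingSet [Finite α] {n : ℕ} (hf : ∀ x, minimalPeriod f x = n) :
    IsLeast {k | ∃ S : Set α, f.IsDominatingSet S ∧ S.ncard = k}
      (Nat.card α / n * ((n + 1) / 2)) := by
  have : Fintype f.Cycles := Fintype.ofFinite _
  have hcard : Nat.card α = Fintype.card f.Cycles * n := by
    rw [Nat.card_congr f.cycleCoords, Nat.card_sigma]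
    simp [hf]
  have hsum : ∑ ω, (f.cycleLength ω + 1) / 2 = Nat.card α / n * ((n + 1) / 2) := by
    simp only [cycleLength, hf, sum_const, card_univ, smul_eq_mul, hcard]
    rcases eq_or_ne n 0 with rfl | hn
    · have : IsEmpty f.Cycles := ⟨fun ω => NeZero.ne _ (hf ω.out)⟩
      simp
    · rw [Nat.mul_div_cancel _ hn.bot_lt]
  rw [← hsum]
  exact ⟨f.exists_isDominatingSet_ncard_eq,
    fun _ ⟨_, hS, hk⟩ => hk ▸ f.sum_le_ncard_of_isDominatingSet hS⟩

end Equiv.Perm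

theorem Equiv.minimalPeriod_mulRight {G : Type*} [Group G] (c g : G) :
    minimalPeriod (Equiv.mulRight c) g = orderOf c := by
  rw [orderOf, minimalPeriod_eq_minimalPeriod_iff]
  intro k
  simp [IsPeriodicPt, IsFixedPt, coe_mulRight, mul_right_iterate_apply]

theorem orderOf_finRotate {n : ℕ} (hn : 2 ≤ n) : orderOf (finRotate n) = n := by
  rw [← Perm.lcm_cycleType, cycleType_finRotate_of_le hn, Multiset.lcm_singleton, normalize_eq]

theorem Equiv.Perm.eq_of_forall_ne_apply_eq {α : Type*} [Finite α] {σ τ : Perm α} (a : α)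
    (h : ∀ x ≠ a, σ x = τ x) : σ = τ := by
  ext x
  obtain rfl | hx := eq_or_ne x a
  · by_contra hne
    have hb : σ.symm (τ x) ≠ x := fun hb => hne (σ.symm_apply_eq.mp hb).symm
    exact hb (τ.injective (by rw [← h _ hb, apply_symm_apply] : τ (σ.symm (τ x)) = τ x))
  · exact h x hx

theorem finRotate_apply_of_lt {n : ℕ} (i : Fin n) (hi : (i : ℕ) + 1 < n) :
    finRotate n i = ⟨i + 1, hi⟩ := by
  obtain ⟨m, rfl⟩ : ∃ m, n = m + 1 := ⟨n - 1, by omega⟩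
  exact finRotate_of_lt (k := i) (by omega)

section PermutationDeBruijn
variable {n : ℕ}

theorem dbConstrained_self_iff_injective (x : Fin n → Fin n) :
    dbConstrained n n n x ↔ Injective x := by
  refine ⟨fun h a b hab => ?_, fun h i j hij hx => absurd (h hx) hij.ne⟩
  by_contra hne
  rcases lt_or_gt_of_ne hne with hlt | hlt
  · have := h a b hlt hab; omega
  · have := h b a hlt hab.symm; omega

variable (n) in
noncomputable def dbVtxEquivPerm : dbVtx n n n ≃ Perm (Fin n) where
  toFun x := Equiv.ofBijective x.val <|
    Finite.injective_iff_bijective.mp ((dbConstrained_self_iff_injective _).mp x.2)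
  invFun σ := ⟨σ, (dbConstrained_self_iff_injective _).mpr σ.injective⟩
  left_inv _ := rfl
  right_inv _ := Equiv.ext fun _ => rfl

theorem dbVtxEquivPerm_apply (x : dbVtx n n n) (i : Fin n) : dbVtxEquivPerm n x i = x.val i :=
  rfl

theorem dbShift_iff_s14 (x y : dbVtx n n n) :
    dbShift x y ↔ dbVtxEquivPerm n y = dbVtxEquivPerm n x * finRotate n := by
  refine ⟨fun h => ?_, fun h i hi => ?_⟩
  · obtain _ | m := n
    · exact Subsingleton.elim _ _
    refine Perm.eq_of_forall_ne_apply_eq (Fin.last m) fun i hi => ?_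
    have hi' : (i : ℕ) + 1 < m + 1 := by have := Fin.val_lt_last hi; omega
    rw [Perm.mul_apply, dbVtxEquivPerm_apply, dbVtxEquivPerm_apply, finRotate_apply_of_lt i hi',
      h i hi']
  · rw [← dbVtxEquivPerm_apply, h, Perm.mul_apply, finRotate_apply_of_lt i hi,
      dbVtxEquivPerm_apply]

theorem dbDirDominating_iff (S : Set (dbVtx n n n)) :
    dbDirDominating S ↔
      (Equiv.mulRight (finRotate n)).IsDominatingSet (dbVtxEquivPerm n '' S) := by
  set e := dbVtxEquivPerm n
  refine ⟨fun h σ => ?_, fun h v => ?_⟩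
  · obtain ⟨s, hs, rfl | hsv⟩ := h (e.symm σ)
    · exact .inl ⟨_, hs, e.apply_symm_apply σ⟩
    · rw [dbShift_iff_s14, e.apply_symm_apply] at hsv
      exact .inr ⟨s, hs, by simp [e, hsv]⟩
  · rcases h (e v) with ⟨s, hs, hsv⟩ | ⟨s, hs, hsv⟩
    · exact ⟨s, hs, .inl (e.injective hsv)⟩
    · refine ⟨s, hs, .inr ((dbShift_iff_s14 s v).mpr ?_)⟩
      simp [e, hsv]

theorem gammaDir_self_eq :
    gammaDir n n n = sInf {k | ∃ S : Set (Perm (Fin n)),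
      (Equiv.mulRight (finRotate n)).IsDominatingSet S ∧ S.ncard = k} := by
  unfold gammaDir
  congr 1
  ext k
  constructor
  · rintro ⟨S, -, rfl, hS⟩
    exact ⟨_, (dbDirDominating_iff S).mp hS,
      Set.ncard_image_of_injective S (dbVtxEquivPerm n).injective⟩
  · rintro ⟨T, hT, rfl⟩
    refine ⟨(dbVtxEquivPerm n).symm '' T, Set.toFinite _,
      Set.ncard_image_of_injective T (dbVtxEquivPerm n).symm.injective, ?_⟩
    rwa [dbDirDominating_iff, Equiv.image_symm_image]

end PermutationDeBruijn

theorem Nat.ceil_natCast_div_two {K : Type*} [Field K] [LinearOrder K] [IsStrictOrderedRing K]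
    [FloorSemiring K] (n : ℕ) : ⌈(n : K) / 2⌉₊ = (n + 1) / 2 := by
  apply le_antisymm
  · rw [Nat.ceil_le, div_le_iff₀ two_pos]
    exact_mod_cast (by omega : n ≤ (n + 1) / 2 * 2)
  · have h := Nat.le_ceil ((n : K) / 2)
    rw [div_le_iff₀ two_pos] at h
    have : n ≤ ⌈(n : K) / 2⌉₊ * 2 := by exact_mod_cast h
    omega

/-- `γ(cDB⁺(n,n,n)) = ⌈n/2⌉ * (n-1)!`. -/
theorem gammaDir_permutations (n : ℕ) (hn : 2 ≤ n) :
    gammaDir n n n = ⌈(n : ℚ) / 2⌉₊ * (n - 1).factorial := by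
  have hperiod (σ : Perm (Fin n)) : minimalPeriod (Equiv.mulRight (finRotate n)) σ = n := by
    rw [minimalPeriod_mulRight, orderOf_finRotate hn]
  rw [gammaDir_self_eq, (Perm.isLeast_ncard_isDominatingSet _ hperiod).csInf_eq, Nat.card_perm,
    Nat.card_fin, Nat.ceil_natCast_div_two, ← Nat.mul_factorial_pred (by omega : n ≠ 0),
    Nat.mul_div_cancel_left _ (by omega), mul_comm]
end
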